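/- There exists a constant C > 0 such that for every finitely supported function f : ℤ² → ℂ one has Σ_{n∈ℤ²} Λ(n)^{−4} |(A(A f))(n)|² ≤ C · Σ_{n∈ℤ²} |f(n)|²; i.e., the operator Λ^{−2}(Q) A² extends to a bounded operator on ℓ²(ℤ²,ℂ). -/

import Mathlib

open scoped ENNReal
open Filter

noncomputable section

/-- The Hilbert space `ℓ²(ℤ², ℂ)`. -/
abbrev H2 : Type := lp (fun _ : ℤ × ℤ => ℂ) 2

/-- The triangular-lattice Laplacian, acting pointwise on functions `ℤ² → ℂ`. -/
def lapT (f : ℤ × ℤ → ℂ) : ℤ × ℤ → ℂ := fun n =>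
  (1/6 : ℂ) * (f (n.1 + 1, n.2) + f (n.1 - 1, n.2) + f (n.1, n.2 + 1)
    + f (n.1, n.2 - 1) + f (n.1 + 1, n.2 - 1) + f (n.1 - 1, n.2 + 1))

/-- The symbol `F(x₁,x₂) = (1/3)(cos x₁ + cos x₂ + cos (x₁ - x₂))`. -/
def symbF (x : ℝ × ℝ) : ℝ := (1/3) * (Real.cos x.1 + Real.cos x.2 + Real.cos (x.1 - x.2))

/-- `∂₁ F`. -/
def d1F (x : ℝ × ℝ) : ℝ := -(1/3) * (Real.sin x.1 + Real.sin (x.1 - x.2))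

/-- `∂₂ F`. -/
def d2F (x : ℝ × ℝ) : ℝ := -(1/3) * (Real.sin x.2 - Real.sin (x.1 - x.2))

/-- Japanese bracket `⟨t⟩ = √(1/2 + t²)`. -/
def jap (t : ℝ) : ℝ := Real.sqrt (1/2 + t^2)

/-- The weight `Λ(n₁,n₂) = ⟨n₁⟩ + ⟨n₂⟩`. -/
def Lam (n : ℤ × ℤ) : ℝ := jap (n.1 : ℝ) + jap (n.2 : ℝ)

/-- The conjugate operator `A`, acting pointwise on functions `ℤ² → ℂ`. -/
def opA (f : ℤ × ℤ → ℂ) : ℤ × ℤ → ℂ := fun n =>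
  (Complex.I / 6) *
    (((n.1 : ℂ) + 1/2) * f (n.1 + 1, n.2) - ((n.1 : ℂ) - 1/2) * f (n.1 - 1, n.2)
      + ((n.2 : ℂ) + 1/2) * f (n.1, n.2 + 1) - ((n.2 : ℂ) - 1/2) * f (n.1, n.2 - 1)
      + ((n.2 : ℂ) - (n.1 : ℂ) + 1) * f (n.1 - 1, n.2 + 1)
      + ((n.1 : ℂ) - (n.2 : ℂ) + 1) * f (n.1 + 1, n.2 - 1))

/-- The perturbed Laplacian `Δ̃` with weight `m`, acting pointwise on functions `ℤ² → ℂ`: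
`(Δ̃ f)(n) = (1/6) Σ_{l ∼ n} f(l) / (√(m n) √(m l))`. -/
def lapPert (m : ℤ × ℤ → ℝ) (f : ℤ × ℤ → ℂ) : ℤ × ℤ → ℂ := fun n =>
  (1/6 : ℂ) *
    (f (n.1 + 1, n.2) / ((Real.sqrt (m n) * Real.sqrt (m (n.1 + 1, n.2)) : ℝ) : ℂ)
      + f (n.1 - 1, n.2) / ((Real.sqrt (m n) * Real.sqrt (m (n.1 - 1, n.2)) : ℝ) : ℂ)
      + f (n.1, n.2 + 1) / ((Real.sqrt (m n) * Real.sqrt (m (n.1, n.2 + 1)) : ℝ) : ℂ)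
      + f (n.1, n.2 - 1) / ((Real.sqrt (m n) * Real.sqrt (m (n.1, n.2 - 1)) : ℝ) : ℂ)
      + f (n.1 + 1, n.2 - 1) / ((Real.sqrt (m n) * Real.sqrt (m (n.1 + 1, n.2 - 1)) : ℝ) : ℂ)
      + f (n.1 - 1, n.2 + 1) / ((Real.sqrt (m n) * Real.sqrt (m (n.1 - 1, n.2 + 1)) : ℝ) : ℂ))


/-! Each term of `A f (n)` is `f` at a triangular-lattice neighbour `n + s`, with a coefficient
of size at most `2 Λ(n)`, and `Λ` grows by at most a factor `3` between neighbours. Hence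
`|A² f (n)| ≤ Λ(n)² / 3 · Σ |f (n + s + t)|` over the `36` pairs of neighbour steps, and
Cauchy–Schwarz together with the translation invariance of `Σ |f|²` gives the bound
with `C = 4 · 36 = 144`. -/

open Finset

lemma abs_le_jap (t : ℝ) : |t| ≤ jap t := by
  rw [← Real.sqrt_sq_eq_abs]
  exact Real.sqrt_le_sqrt (by linarith)

lemma half_le_jap (t : ℝ) : 1 / 2 ≤ jap t :=
  Real.le_sqrt_of_sq_le (by nlinarith [sq_nonneg t])

lemma jap_add_le (a c : ℝ) : jap (a + c) ≤ jap a + |c| := by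
  have hsq : jap a ^ 2 = 1 / 2 + a ^ 2 := Real.sq_sqrt (by positivity)
  have hac : a * c ≤ jap a * |c| :=
    (le_abs_self _).trans ((abs_mul a c).trans_le
      (mul_le_mul_of_nonneg_right (abs_le_jap a) (abs_nonneg c)))
  refine Real.sqrt_le_iff.mpr ⟨by linarith [half_le_jap a, abs_nonneg c], ?_⟩
  nlinarith [sq_abs c]

lemma one_le_Lam (n : ℤ × ℤ) : 1 ≤ Lam n := by
  have := half_le_jap (n.1 : ℝ); have := half_le_jap (n.2 : ℝ)
  unfold Lam; linarith

lemma Lam_add_le (n s : ℤ × ℤ) : Lam (n + s) ≤ Lam n + |(s.1 : ℝ)| + |(s.2 : ℝ)| := by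
  have h1 := jap_add_le (n.1 : ℝ) s.1
  have h2 := jap_add_le (n.2 : ℝ) s.2
  simp only [Lam, Prod.fst_add, Prod.snd_add, Int.cast_add]
  linarith

/-- The six neighbours of the origin in the triangular lattice. -/
def triNeighbors : Finset (ℤ × ℤ) := {(1, 0), (-1, 0), (0, 1), (0, -1), (1, -1), (-1, 1)}

lemma abs_le_one_of_mem_triNeighbors :
    ∀ s ∈ triNeighbors, |(s.1 : ℝ)| ≤ 1 ∧ |(s.2 : ℝ)| ≤ 1 := by
  have : ∀ s ∈ triNeighbors, |s.1| ≤ 1 ∧ |s.2| ≤ 1 := by decide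
  exact fun s hs => by exact_mod_cast this s hs

/-- The coefficient of `f (n + s)` in `opA f n`; it equals `(|n + s|² - |n|²) / 2`. -/
def shiftCoeff (n s : ℤ × ℤ) : ℝ := s.1 * n.1 + s.2 * n.2 + ((s.1 : ℝ) ^ 2 + (s.2 : ℝ) ^ 2) / 2

lemma opA_eq_sum (f : ℤ × ℤ → ℂ) (n : ℤ × ℤ) :
    opA f n = Complex.I / 6 * ∑ s ∈ triNeighbors, (shiftCoeff n s : ℂ) * f (n + s) := by
  obtain ⟨n₁, n₂⟩ := n
  simp only [opA, triNeighbors, shiftCoeff]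
  rw [sum_insert (by decide), sum_insert (by decide), sum_insert (by decide),
    sum_insert (by decide), sum_pair (by decide)]
  simp only [Prod.mk_add_mk]
  push_cast
  ring_nf

lemma abs_shiftCoeff_le (n : ℤ × ℤ) {s : ℤ × ℤ} (hs : s ∈ triNeighbors) :
    |shiftCoeff n s| ≤ 2 * Lam n := by
  obtain ⟨h1, h2⟩ := abs_le_one_of_mem_triNeighbors s hs
  have hsq1 : (s.1 : ℝ) ^ 2 ≤ 1 := by nlinarith [sq_abs (s.1 : ℝ), abs_nonneg (s.1 : ℝ)]
  have hsq2 : (s.2 : ℝ) ^ 2 ≤ 1 := by nlinarith [sq_abs (s.2 : ℝ), abs_nonneg (s.2 : ℝ)]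
  have hm1 : |(s.1 : ℝ) * n.1| ≤ jap n.1 := by
    rw [abs_mul]; nlinarith [abs_le_jap (n.1 : ℝ), abs_nonneg (n.1 : ℝ), abs_nonneg (s.1 : ℝ)]
  have hm2 : |(s.2 : ℝ) * n.2| ≤ jap n.2 := by
    rw [abs_mul]; nlinarith [abs_le_jap (n.2 : ℝ), abs_nonneg (n.2 : ℝ), abs_nonneg (s.2 : ℝ)]
  have := one_le_Lam n
  unfold shiftCoeff Lam at *
  rw [abs_le] at *
  constructor <;> nlinarith [sq_nonneg (s.1 : ℝ), sq_nonneg (s.2 : ℝ)]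

lemma norm_opA_le (f : ℤ × ℤ → ℂ) (n : ℤ × ℤ) :
    ‖opA f n‖ ≤ Lam n / 3 * ∑ s ∈ triNeighbors, ‖f (n + s)‖ := by
  rw [opA_eq_sum, norm_mul, norm_div, Complex.norm_I, mul_sum]
  calc 1 / ‖(6 : ℂ)‖ * ‖∑ s ∈ triNeighbors, (shiftCoeff n s : ℂ) * f (n + s)‖
      ≤ 1 / 6 * ∑ s ∈ triNeighbors, 2 * Lam n * ‖f (n + s)‖ := by
        rw [Complex.norm_ofNat]
        gcongr
        refine (norm_sum_le _ _).trans (sum_le_sum fun s hs => ?_)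
        rw [norm_mul, Complex.norm_real, Real.norm_eq_abs]
        exact mul_le_mul_of_nonneg_right (abs_shiftCoeff_le n hs) (norm_nonneg _)
    _ = ∑ s ∈ triNeighbors, Lam n / 3 * ‖f (n + s)‖ := by
        rw [mul_sum]; congr 1; ext; ring

lemma norm_opA_opA_le (f : ℤ × ℤ → ℂ) (n : ℤ × ℤ) :
    ‖opA (opA f) n‖ ≤
      Lam n ^ 2 / 3 * ∑ u ∈ triNeighbors ×ˢ triNeighbors, ‖f (n + (u.1 + u.2))‖ := by
  have hL := one_le_Lam n
  calc ‖opA (opA f) n‖ ≤ Lam n / 3 * ∑ s ∈ triNeighbors, ‖opA f (n + s)‖ := norm_opA_le _ n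
    _ ≤ Lam n / 3 * ∑ s ∈ triNeighbors, Lam n * ∑ t ∈ triNeighbors, ‖f (n + s + t)‖ := by
        gcongr with s hs
        obtain ⟨h1, h2⟩ := abs_le_one_of_mem_triNeighbors s hs
        refine (norm_opA_le f (n + s)).trans (mul_le_mul_of_nonneg_right ?_ (by positivity))
        linarith [Lam_add_le n s]
    _ = Lam n ^ 2 / 3 * ∑ u ∈ triNeighbors ×ˢ triNeighbors, ‖f (n + (u.1 + u.2))‖ := by
        simp only [sum_product, ← mul_sum, add_assoc]
        ring

lemma hasSum_sum_comp_add {G ι : Type*} [AddGroup G] (I : Finset ι) (σ : ι → G)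
    {g : G → ℝ} {a : ℝ} (hg : HasSum g a) :
    HasSum (fun n => ∑ i ∈ I, g (n + σ i)) (#I * a) := by
  have := hasSum_sum fun i (_ : i ∈ I) => (Equiv.addRight (σ i)).hasSum_iff.mpr hg
  simpa [sum_const] using this

lemma inv_Lam_pow_four_mul_norm_opA_opA_sq_le (f : ℤ × ℤ → ℂ) (n : ℤ × ℤ) :
    (Lam n ^ 4)⁻¹ * ‖opA (opA f) n‖ ^ 2 ≤
      4 * ∑ u ∈ triNeighbors ×ˢ triNeighbors, ‖f (n + (u.1 + u.2))‖ ^ 2 := by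
  set S := ∑ u ∈ triNeighbors ×ˢ triNeighbors, ‖f (n + (u.1 + u.2))‖
  have hL : 0 < Lam n := one_pos.trans_le (one_le_Lam n)
  have hcs : S ^ 2 ≤ 36 * ∑ u ∈ triNeighbors ×ˢ triNeighbors, ‖f (n + (u.1 + u.2))‖ ^ 2 := by
    have := sq_sum_le_card_mul_sum_sq (s := triNeighbors ×ˢ triNeighbors)
      (f := fun u => ‖f (n + (u.1 + u.2))‖)
    rwa [card_product, show #triNeighbors = 6 from rfl] at this
  have hsq : ‖opA (opA f) n‖ ^ 2 ≤ (Lam n ^ 2 / 3 * S) ^ 2 :=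
    pow_le_pow_left₀ (norm_nonneg _) (norm_opA_opA_le f n) 2
  rw [inv_mul_le_iff₀ (by positivity)]
  nlinarith [pow_pos hL 4]

/-- `Λ^{-2}(Q) A²` extends to a bounded operator on `ℓ²(ℤ²,ℂ)`. -/
theorem weight_inv_sq_opA_sq_bounded :
    ∃ C > 0, ∀ f : ℤ × ℤ → ℂ, (Function.support f).Finite →
      ∑' n : ℤ × ℤ, (Lam n ^ 4)⁻¹ * ‖opA (opA f) n‖ ^ 2 ≤ C * ∑' n : ℤ × ℤ, ‖f n‖ ^ 2 := by
  refine ⟨144, by norm_num, fun f hf => ?_⟩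
  have hf2 : Summable fun n => ‖f n‖ ^ 2 :=
    summable_of_hasFiniteSupport (hf.subset fun n hn => by simpa using hn)
  have hdom := (hasSum_sum_comp_add (triNeighbors ×ˢ triNeighbors) (fun u => u.1 + u.2)
    hf2.hasSum).mul_left 4
  have hbound := inv_Lam_pow_four_mul_norm_opA_opA_sq_le f
  have hlhs := hdom.summable.of_nonneg_of_le (fun n => by positivity) hbound
  calc ∑' n, (Lam n ^ 4)⁻¹ * ‖opA (opA f) n‖ ^ 2
      ≤ 4 * (#(triNeighbors ×ˢ triNeighbors) * ∑' n, ‖f n‖ ^ 2) :=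
        hasSum_le hbound hlhs.hasSum hdom
    _ = 144 * ∑' n, ‖f n‖ ^ 2 := by
        rw [card_product, show #triNeighbors = 6 by rfl]
        norm_num
        ring
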